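/- arXiv:2111.12050 — 3 statements merged into one kernel-verified Lean document; each statement's English description precedes it below -/
import Mathlib

section
/- Let (Δ_t)_{t≥0} be a sequence of nonnegative reals with Δ₀ = 0, and suppose for every t ≥ 1 there is ε_t ∈ {0,1} such that Δ_t² ≤ (1+p)^{ε_t} Δ_{t−1}² + c²(1 + ε_t/p) for all p > 0 (the same ε_t works for all p), where c > 0. Then, choosing p = 1/Σ_{j=1}^T ε_j, we have Δ_T² ≤ e c² (T + (Σ_{j=1}^T ε_j)²). -/
/-!
Writing `x_t = Δ_t²`, the recursion is `x_t ≤ A_t x_{t-1} + B_t` with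
`A_t = (1 + p)^{ε_t} ≥ 1` and `B_t = c²(1 + ε_t / p) ≥ 0`; unrolling from `x_0 = 0` gives
`x_T ≤ (∏ A_t) ∑ B_t = (1 + p)^S c² (T + S / p)` with `S = ∑ ε_t`. For `p = 1 / S` this is
`(1 + 1/S)^S c² (T + S²)`, and `(1 + 1/S)^S ≤ e` since `1 + 1/S ≤ e^{1/S}`.
-/

open Finset Real

theorem le_prod_mul_sum_of_le_mul_add {x A B : ℕ → ℝ} (hA : ∀ t, 1 ≤ A t)
    (hB : ∀ t, 0 ≤ B t) (hx₀ : x 0 ≤ 0)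
    (hrec : ∀ t, x (t + 1) ≤ A (t + 1) * x t + B (t + 1)) (t : ℕ) :
    x t ≤ (∏ j ∈ Icc 1 t, A j) * ∑ j ∈ Icc 1 t, B j := by
  induction t with
  | zero => simpa using hx₀
  | succ n ih =>
    have hP : 1 ≤ ∏ j ∈ Icc 1 n, A j := one_le_prod fun j _ ↦ hA j
    rw [prod_Icc_succ_top (by omega), sum_Icc_succ_top (by omega)]
    set P := ∏ j ∈ Icc 1 n, A j
    set S := ∑ j ∈ Icc 1 n, B j
    calc x (n + 1) ≤ A (n + 1) * (P * S) + B (n + 1) :=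
          (hrec n).trans (by gcongr; linarith [hA (n + 1)])
      _ ≤ P * A (n + 1) * (S + B (n + 1)) := by
          have hPA : 1 ≤ P * A (n + 1) := one_le_mul_of_one_le_of_one_le hP (hA _)
          nlinarith [le_mul_of_one_le_left (hB (n + 1)) hPA]

theorem one_add_inv_rpow_le_exp_one {s : ℝ} (hs : 0 ≤ s) : (1 + s⁻¹) ^ s ≤ exp 1 :=
  calc (1 + s⁻¹) ^ s ≤ exp s⁻¹ ^ s := by
        gcongr
        rw [add_comm]; exact add_one_le_exp _
    _ = exp (s⁻¹ * s) := (exp_mul _ _).symm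
    _ ≤ exp 1 := exp_le_exp.mpr (inv_mul_le_one_of_le₀ le_rfl hs)

theorem exists_pos_one_add_rpow_mul_le {S T : ℝ} (hS : 0 ≤ S) (hT : 0 ≤ T) :
    ∃ p > 0, (1 + p) ^ S * (T + S / p) ≤ exp 1 * (T + S ^ 2) := by
  -- `p = S⁻¹` is unavailable when `S = 0`, but then any `p` works.
  rcases hS.eq_or_lt with rfl | hS
  · refine ⟨1, one_pos, ?_⟩
    simpa using mul_le_mul_of_nonneg_right (one_le_exp zero_le_one) hT
  · refine ⟨S⁻¹, inv_pos.mpr hS, ?_⟩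
    rw [div_inv_eq_mul, ← sq]
    gcongr
    exact one_add_inv_rpow_le_exp_one hS.le

theorem stability_unrolling_nonsmooth_general (Δ ε : ℕ → ℝ) (c : ℝ)
    (h0 : Δ 0 = 0)
    (hε : ∀ t, ε t = 0 ∨ ε t = 1)
    (hrec : ∀ t : ℕ, 1 ≤ t → ∀ p : ℝ, 0 < p →
      (Δ t) ^ 2 ≤ (1 + p) ^ (ε t) * (Δ (t - 1)) ^ 2 + c ^ 2 * (1 + ε t / p))
    (T : ℕ) :
    (Δ T) ^ 2
      ≤ Real.exp 1 * c ^ 2 * (T + (∑ j ∈ Finset.Icc 1 T, ε j) ^ 2) := by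
  have hε₀ : ∀ t, 0 ≤ ε t := fun t ↦ by rcases hε t with h | h <;> simp [h]
  set S := ∑ j ∈ Icc 1 T, ε j
  obtain ⟨p, hp, hpS⟩ :=
    exists_pos_one_add_rpow_mul_le (sum_nonneg fun j _ ↦ hε₀ j) T.cast_nonneg
  have hunroll := le_prod_mul_sum_of_le_mul_add (x := fun t ↦ Δ t ^ 2)
    (A := fun t ↦ (1 + p) ^ ε t) (B := fun t ↦ c ^ 2 * (1 + ε t / p))
    (fun t ↦ one_le_rpow (le_add_of_nonneg_right hp.le) (hε₀ t))
    (fun t ↦ by have := hε₀ t; positivity)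
    (by simp [h0]) (fun t ↦ by simpa using hrec (t + 1) (by omega) p hp) T
  rw [← rpow_sum_of_pos (by positivity), ← mul_sum, sum_add_distrib, ← sum_div] at hunroll
  calc Δ T ^ 2 ≤ c ^ 2 * ((1 + p) ^ S * (T + S / p)) := by simpa [S, mul_left_comm] using hunroll
    _ ≤ c ^ 2 * (exp 1 * (T + S ^ 2)) := by gcongr
    _ = exp 1 * c ^ 2 * (T + S ^ 2) := by ring

theorem stability_unrolling_nonsmooth (Δ ε : ℕ → ℝ) (c : ℝ) (hc : 0 < c)
    (hΔ : ∀ t, 0 ≤ Δ t) (h0 : Δ 0 = 0)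
    (hε : ∀ t, ε t = 0 ∨ ε t = 1)
    (hrec : ∀ t : ℕ, 1 ≤ t → ∀ p : ℝ, 0 < p →
      (Δ t) ^ 2 ≤ (1 + p) ^ (ε t) * (Δ (t - 1)) ^ 2 + c ^ 2 * (1 + ε t / p))
    (T : ℕ) :
    (Δ T) ^ 2
      ≤ Real.exp 1 * c ^ 2 * (T + (∑ j ∈ Finset.Icc 1 T, ε j) ^ 2) :=
  stability_unrolling_nonsmooth_general Δ ε c h0 hε hrec T
end

section
/- Let f : ℝ^d → ℝ be convex with ‖∇f(w)‖ ≤ G, and let w_t = w_{t−1} − η_t g_t where ‖g_t‖ ≤ G and g_t = ∇f_t(w_{t−1}) for convex G-Lipschitz functions f_t. Then for any fixed w and T ≥ 1: Σ_{t=1}^T η_t (f_t(w_{t−2}) − f_t(w)) ≤ (1/2)‖w₀ − w‖² + (G²/2) Σ_{t=1}^T (2η_{t−1}η_t + η_t²), where w_{−1} = w₀ and η₀ = 0. -/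
/-!
At step `t` the loss is paid at the stale point `w (t-2)` instead of `w (t-1)`. The Lipschitz bound
charges this at `G ‖w (t-2) - w (t-1)‖ ≤ G² η (t-1)`; at `w (t-1)` the tangent-plane inequality and
the expansion of `‖w t - u‖²` give the usual online-gradient-descent bound, whose distance terms
telescope.
-/

open Finset

section FirstOrder

variable {F : Type*} [NormedAddCommGroup F] [InnerProductSpace ℝ F] [CompleteSpace F]
  {f : F → ℝ}

theorem ConvexOn.add_inner_gradient_le (hf : ConvexOn ℝ Set.univ f) {x : F}
    (hx : DifferentiableAt ℝ f x) (y : F) :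
    f x + inner ℝ (gradient f x) (y - x) ≤ f y := by
  have hline : ConvexOn ℝ Set.univ (f ∘ AffineMap.lineMap (k := ℝ) x y) := by
    simpa using hf.comp_affineMap (AffineMap.lineMap x y : ℝ →ᵃ[ℝ] F)
  have hderiv : HasDerivAt (f ∘ AffineMap.lineMap (k := ℝ) x y)
      (inner ℝ (gradient f x) (y - x)) 0 := by
    have hfx : HasFDerivAt f (InnerProductSpace.toDual ℝ F (gradient f x))
        (AffineMap.lineMap x y (0 : ℝ)) := by
      simpa using hx.hasGradientAt.hasFDerivAt
    simpa using hfx.comp_hasDerivAt (0 : ℝ) AffineMap.hasDerivAt_lineMap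
  have hslope := hline.le_slope_of_hasDerivAt (Set.mem_univ 0) (Set.mem_univ 1) one_pos hderiv
  simp only [slope_def_field, Function.comp_apply, AffineMap.lineMap_apply_one,
    AffineMap.lineMap_apply_zero, sub_zero, div_one] at hslope
  linarith

end FirstOrder

section GradientStep

variable {F : Type*} [NormedAddCommGroup F] [InnerProductSpace ℝ F]

theorem norm_sub_smul_sub_sq (x u g : F) (η : ℝ) :
    ‖x - η • g - u‖ ^ 2 = ‖x - u‖ ^ 2 - 2 * η * inner ℝ g (x - u) + η ^ 2 * ‖g‖ ^ 2 := by
  rw [sub_right_comm, norm_sub_sq_real, real_inner_smul_right, real_inner_comm, norm_smul,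
    mul_pow, Real.norm_eq_abs, sq_abs]
  ring

variable [CompleteSpace F] {f : F → ℝ}

theorem gradient_step_regret_le (hf : ConvexOn ℝ Set.univ f) {K : NNReal}
    (hL : LipschitzWith K f) {G : ℝ} (hK : (K : ℝ) ≤ G) {x z : F} (hx : DifferentiableAt ℝ f x)
    (hgrad : ‖gradient f x‖ ≤ G) {η η' : ℝ} (hη : 0 ≤ η) (hz : ‖z - x‖ ≤ G * η') (u : F) :
    η * (f z - f u) ≤ (1 / 2) * (‖x - u‖ ^ 2 - ‖x - η • gradient f x - u‖ ^ 2)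
      + (G ^ 2 / 2) * (2 * η' * η + η ^ 2) := by
  have hG : 0 ≤ G := K.coe_nonneg.trans hK
  have hmove : f z - f x ≤ G * (G * η') := calc
    f z - f x ≤ dist (f z) (f x) := (le_abs_self _).trans_eq (Real.dist_eq _ _).symm
    _ ≤ K * dist z x := hL.dist_le_mul z x
    _ ≤ G * ‖z - x‖ := by rw [dist_eq_norm]; gcongr
    _ ≤ G * (G * η') := by gcongr
  have htangent : f x - f u ≤ inner ℝ (gradient f x) (x - u) := by
    have := hf.add_inner_gradient_le hx u
    rw [← neg_sub x u, inner_neg_right] at this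
    linarith
  have hsq := norm_sub_smul_sub_sq x u (gradient f x) η
  have hgrad_sq : η ^ 2 * ‖gradient f x‖ ^ 2 ≤ η ^ 2 * G ^ 2 := by gcongr
  linarith [mul_le_mul_of_nonneg_left hmove hη, mul_le_mul_of_nonneg_left htangent hη]

end GradientStep

theorem Finset.sum_Icc_one_sub_pred (a : ℕ → ℝ) (T : ℕ) :
    ∑ t ∈ Icc 1 T, (a (t - 1) - a t) = a 0 - a T := by
  induction T with
  | zero => simp
  | succ T ih => rw [sum_Icc_succ_top (by omega), ih, Nat.add_sub_cancel]; ring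

/-- Truncated subtraction makes `w (0 - 1) = w 0`, so the case `s = 0` holds trivially. -/
theorem norm_pred_iterate_sub_le {F : Type*} [NormedAddCommGroup F] [InnerProductSpace ℝ F]
    [CompleteSpace F] {f : ℕ → F → ℝ} {G : ℝ} {η : ℕ → ℝ} {w : ℕ → F} (hG : 0 ≤ G)
    (hη : ∀ t, 0 ≤ η t) (hgrad : ∀ t v, ‖gradient (f t) v‖ ≤ G)
    (hupd : ∀ t : ℕ, 1 ≤ t → w t = w (t - 1) - η t • gradient (f t) (w (t - 1))) (s : ℕ) :
    ‖w (s - 1) - w s‖ ≤ G * η s := by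
  rcases Nat.eq_zero_or_pos s with rfl | hs
  · simpa using mul_nonneg hG (hη 0)
  · rw [hupd s hs, sub_sub_cancel, norm_smul, Real.norm_of_nonneg (hη s), mul_comm]
    exact mul_le_mul_of_nonneg_right (hgrad s _) (hη s)

theorem sgd_regret_convex_general {d : ℕ} (f : ℕ → EuclideanSpace ℝ (Fin d) → ℝ) (G : ℝ)
    (η : ℕ → ℝ) (w : ℕ → EuclideanSpace ℝ (Fin d))
    (hG : 0 ≤ G) (hη : ∀ t, 0 ≤ η t)
    (hconv : ∀ t, ConvexOn ℝ Set.univ (f t))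
    (hdiff : ∀ t, Differentiable ℝ (f t))
    (hLip : ∀ t, LipschitzWith (Real.toNNReal G) (f t))
    (hgrad : ∀ t v, ‖gradient (f t) v‖ ≤ G)
    (hupd : ∀ t : ℕ, 1 ≤ t → w t = w (t - 1) - η t • gradient (f t) (w (t - 1)))
    (u : EuclideanSpace ℝ (Fin d)) (T : ℕ) :
    ∑ t ∈ Finset.Icc 1 T, η t * (f t (w (t - 2)) - f t u)
      ≤ (1 / 2) * ‖w 0 - u‖ ^ 2
        + (G ^ 2 / 2) * ∑ t ∈ Finset.Icc 1 T, (2 * η (t - 1) * η t + (η t) ^ 2) := by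
  have hstep : ∀ t ∈ Icc 1 T, η t * (f t (w (t - 2)) - f t u)
      ≤ (1 / 2) * (‖w (t - 1) - u‖ ^ 2 - ‖w t - u‖ ^ 2)
        + (G ^ 2 / 2) * (2 * η (t - 1) * η t + η t ^ 2) := by
    intro t ht
    have hdrift := norm_pred_iterate_sub_le hG hη hgrad hupd (t - 1)
    rw [Nat.sub_sub] at hdrift
    rw [hupd t (mem_Icc.mp ht).1]
    exact gradient_step_regret_le (hconv t) (hLip t) (Real.coe_toNNReal G hG).le
      (hdiff t _) (hgrad t _) (hη t) hdrift u
  calc ∑ t ∈ Icc 1 T, η t * (f t (w (t - 2)) - f t u)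
      ≤ ∑ t ∈ Icc 1 T, ((1 / 2) * (‖w (t - 1) - u‖ ^ 2 - ‖w t - u‖ ^ 2)
        + (G ^ 2 / 2) * (2 * η (t - 1) * η t + η t ^ 2)) := sum_le_sum hstep
    _ = (1 / 2) * (‖w 0 - u‖ ^ 2 - ‖w T - u‖ ^ 2)
        + (G ^ 2 / 2) * ∑ t ∈ Icc 1 T, (2 * η (t - 1) * η t + η t ^ 2) := by
      rw [sum_add_distrib, ← mul_sum, ← mul_sum,
        sum_Icc_one_sub_pred (fun t => ‖w t - u‖ ^ 2)]
    _ ≤ _ := by linarith [sq_nonneg ‖w T - u‖]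

theorem sgd_regret_convex {d : ℕ} (f : ℕ → EuclideanSpace ℝ (Fin d) → ℝ) (G : ℝ)
    (η : ℕ → ℝ) (w : ℕ → EuclideanSpace ℝ (Fin d))
    (hG : 0 ≤ G) (hη0 : η 0 = 0) (hη : ∀ t, 0 ≤ η t)
    (hconv : ∀ t, ConvexOn ℝ Set.univ (f t))
    (hdiff : ∀ t, Differentiable ℝ (f t))
    (hLip : ∀ t, LipschitzWith (Real.toNNReal G) (f t))
    (hgrad : ∀ t v, ‖gradient (f t) v‖ ≤ G)
    (hupd : ∀ t : ℕ, 1 ≤ t → w t = w (t - 1) - η t • gradient (f t) (w (t - 1)))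
    (u : EuclideanSpace ℝ (Fin d)) (T : ℕ) (hT : 1 ≤ T) :
    ∑ t ∈ Finset.Icc 1 T, η t * (f t (w (t - 2)) - f t u)
      ≤ (1 / 2) * ‖w 0 - u‖ ^ 2
        + (G ^ 2 / 2) * ∑ t ∈ Finset.Icc 1 T, (2 * η (t - 1) * η t + (η t) ^ 2) :=
  sgd_regret_convex_general f G η w hG hη hconv hdiff hLip hgrad hupd u T
end

section
/- Let F : ℝ^d → ℝ be L-smooth and satisfy the PL condition with parameter μ > 0: 2μ(F(w) − F*) ≤ ‖∇F(w)‖² for all w, where F* = inf F. Suppose (e_j)_{j≥0} with e_j = E[F(w_j)] − F* satisfies e_j ≤ (1 − μη_j) e_{j−1} + 4Lα₀²(η_jη_{j−1} + η_j² + η_jη_{j−1}²) with η_j = 2/(μ(j+1)). Then for all t ≥ 1, e_t ≤ (32Lα₀²/μ²)(1/(t+1) + log(e t)/(μ t(t+1))). -/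
/-!
With `η_j = 2 / (μ (j + 1))` the contraction factor is `1 - μ η_j = (j - 1) / (j + 1)`, so
multiplying the recursion by `j (j + 1)` turns it into `u_j ≤ u_{j-1} + 8c/μ² + 8c/(μ³ j)` for
`u_j = j (j + 1) e_j` and `c = 4 L α₀²`. Since `u_0 = 0`, telescoping gives
`u_t ≤ 8c t/μ² + 8c H_t/μ³`, and `H_t ≤ 1 + log t = log (e t)`.
-/

open MeasureTheory Finset

theorem le_add_sum_range_of_succ_le {G : Type*} [AddCommGroup G] [PartialOrder G]
    [IsOrderedAddMonoid G] {u b : ℕ → G} (h : ∀ n, u (n + 1) ≤ u n + b n) (n : ℕ) :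
    u n ≤ u 0 + ∑ i ∈ range n, b i := by
  have := sum_le_sum fun i (_ : i ∈ range n) => sub_le_iff_le_add'.2 (h i)
  rwa [sum_range_sub, sub_le_iff_le_add'] at this

theorem mul_add_one_mul_le_of_pl_recursion {μ c x a b : ℝ} (hμ : 0 < μ) (hc : 0 ≤ c)
    (hx : 0 < x)
    (h : b ≤ (1 - μ * (2 / (μ * (x + 1)))) * a
        + c * ((2 / (μ * (x + 1))) * (2 / (μ * x)) + (2 / (μ * (x + 1))) ^ 2
            + (2 / (μ * (x + 1))) * (2 / (μ * x)) ^ 2)) :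
    x * (x + 1) * b ≤ (x - 1) * x * a + (8 * c / μ ^ 2 + 8 * c / μ ^ 3 * x⁻¹) := by
  have hfrac : 4 * c / μ ^ 2 * (x / (x + 1)) ≤ 4 * c / μ ^ 2 :=
    mul_le_of_le_one_right (by positivity) ((div_le_one (by positivity)).2 (by linarith))
  calc x * (x + 1) * b ≤ x * (x + 1) * _ := mul_le_mul_of_nonneg_left h (by positivity)
    _ = (x - 1) * x * a
          + (4 * c / μ ^ 2 + 4 * c / μ ^ 2 * (x / (x + 1)) + 8 * c / μ ^ 3 * x⁻¹) := by
      field_simp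
      ring
    _ ≤ (x - 1) * x * a + (8 * c / μ ^ 2 + 8 * c / μ ^ 3 * x⁻¹) := by
      linear_combination hfrac

theorem pl_convergence_rate_general (L μ α₀ : ℝ) (e : ℕ → ℝ)
    (hL : 0 < L) (hμ : 0 < μ)
    (hrec : ∀ j : ℕ, 1 ≤ j →
      e j ≤ (1 - μ * (2 / (μ * ((j : ℝ) + 1)))) * e (j - 1)
        + 4 * L * α₀ ^ 2 * ((2 / (μ * ((j : ℝ) + 1))) * (2 / (μ * (j : ℝ)))
            + (2 / (μ * ((j : ℝ) + 1))) ^ 2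
            + (2 / (μ * ((j : ℝ) + 1))) * (2 / (μ * (j : ℝ))) ^ 2))
    (t : ℕ) (ht : 1 ≤ t) :
    e t ≤ (32 * L * α₀ ^ 2 / μ ^ 2)
        * (1 / ((t : ℝ) + 1) + Real.log (Real.exp 1 * t) / (μ * t * ((t : ℝ) + 1))) := by
  set c := 4 * L * α₀ ^ 2
  set u : ℕ → ℝ := fun n => n * (n + 1) * e n
  have hstep (n : ℕ) : u (n + 1) ≤ u n + (8 * c / μ ^ 2 + 8 * c / μ ^ 3 * ((n : ℝ) + 1)⁻¹) := by
    simpa [u] using mul_add_one_mul_le_of_pl_recursion hμ (by positivity) (by positivity)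
      (hrec (n + 1) n.succ_pos)
  have hsum : ∑ i ∈ range t, (8 * c / μ ^ 2 + 8 * c / μ ^ 3 * ((i : ℝ) + 1)⁻¹)
      = 8 * c / μ ^ 2 * t + 8 * c / μ ^ 3 * harmonic t := by
    rw [sum_add_distrib, ← mul_sum]
    simp [harmonic, mul_comm]
  have hharm : (harmonic t : ℝ) ≤ Real.log (Real.exp 1 * t) := by
    rw [Real.log_mul (Real.exp_ne_zero 1) (by positivity), Real.log_exp]
    exact harmonic_le_one_add_log t
  have hbound : t * (t + 1) * e t
      ≤ 8 * c / μ ^ 2 * t + 8 * c / μ ^ 3 * Real.log (Real.exp 1 * t) := by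
    have htel := le_add_sum_range_of_succ_le hstep t
    simp only [u, hsum] at htel
    linarith [mul_le_mul_of_nonneg_left hharm (by positivity : 0 ≤ 8 * c / μ ^ 3)]
  have ht0 : (0 : ℝ) < t := by exact_mod_cast ht
  calc e t ≤ (8 * c / μ ^ 2 * t + 8 * c / μ ^ 3 * Real.log (Real.exp 1 * t)) / (t * (t + 1)) := by
        rw [le_div_iff₀ (by positivity)]; linarith
    _ = _ := by field_simp; ring

theorem pl_convergence_rate {Ω : Type*} [MeasurableSpace Ω]
    (P : Measure Ω) [IsProbabilityMeasure P] {d : ℕ}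
    (F : EuclideanSpace ℝ (Fin d) → ℝ) (L μ α₀ : ℝ)
    (w : ℕ → Ω → EuclideanSpace ℝ (Fin d)) (e : ℕ → ℝ)
    (hL : 0 < L) (hμ : 0 < μ) (hα : 0 < α₀)
    (hsmooth : ∀ x y, ‖gradient F x - gradient F y‖ ≤ L * ‖x - y‖)
    (hPL : ∀ x, 2 * μ * (F x - ⨅ y, F y) ≤ ‖gradient F x‖ ^ 2)
    (he : ∀ j, e j = (∫ ω, F (w j ω) ∂P) - ⨅ y, F y)
    (hrec : ∀ j : ℕ, 1 ≤ j →
      e j ≤ (1 - μ * (2 / (μ * ((j : ℝ) + 1)))) * e (j - 1)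
        + 4 * L * α₀ ^ 2 * ((2 / (μ * ((j : ℝ) + 1))) * (2 / (μ * (j : ℝ)))
            + (2 / (μ * ((j : ℝ) + 1))) ^ 2
            + (2 / (μ * ((j : ℝ) + 1))) * (2 / (μ * (j : ℝ))) ^ 2))
    (t : ℕ) (ht : 1 ≤ t) :
    e t ≤ (32 * L * α₀ ^ 2 / μ ^ 2)
        * (1 / ((t : ℝ) + 1) + Real.log (Real.exp 1 * t) / (μ * t * ((t : ℝ) + 1))) :=
  pl_convergence_rate_general L μ α₀ e hL hμ hrec t ht
end
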